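/- Let p ≥ 2 be a real number and u ∈ [-2, 2]. Then p^{3/2}(√p + u) + p^{1/2}(√p + u) + p^{-3/2}(√p + u) + p^{-1/2}·u + p^{-2} + u^2 > 0. In particular the genus-4 Ikeda lift Hecke eigenvalue λ_{F_f}(p) = p^{2k-1}·(this expression) is positive for every prime p. -/
import Mathlib

lemma stmt_6_core (s u : ℝ) (hs : 0 < s) (hs2 : 2 ≤ s^2) (hu1 : -2 ≤ u) (hu2 : u ≤ 2) :
    0 < s^8 + s^6 + s^2 + 1 + u*(s^7+s^5+s^3+s) + u^2*s^4 := by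
  have hs1 : 1 < s := by nlinarith
  have hs4 : 4 ≤ s^4 := by nlinarith
  have h1 : 0 ≤ u + 2 := by linarith
  have h2 : 0 ≤ (s^7+s^5+s^3+s) + s^4*(u-2) := by
    nlinarith [mul_nonneg (pow_pos hs 4).le h1,
      mul_nonneg (pow_pos hs 3).le (by nlinarith [sq_nonneg (s-2)] : (0:ℝ) ≤ s^4+s^2-4*s+1)]
  have h3 : 0 < ((s-1)*(s^3-1))^2 :=
    pow_pos (mul_pos (by linarith) (by nlinarith)) 2
  nlinarith [mul_nonneg h1 h2]

/-- For real `p ≥ 2` and `u ∈ [-2,2]`, the normalized eigenvalue expression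
`p^{3/2}(√p+u) + p^{1/2}(√p+u) + p^{-3/2}(√p+u) + p^{-1/2}u + p^{-2} + u²` is positive;
in particular `λ_{F_f}(p) = p^{2k-1} ·` (this expression) is positive. -/
theorem stmt_6 (p u : ℝ) (hp : 2 ≤ p) (hu1 : -2 ≤ u) (hu2 : u ≤ 2) (k : ℕ) :
    0 < p ^ ((3:ℝ)/2) * (Real.sqrt p + u) + p ^ ((1:ℝ)/2) * (Real.sqrt p + u)
        + p ^ (-(3:ℝ)/2) * (Real.sqrt p + u) + p ^ (-(1:ℝ)/2) * u
        + p ^ (-2:ℝ) + u^2 ∧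
    0 < p ^ (2*(k:ℝ) - 1) *
        (p ^ ((3:ℝ)/2) * (Real.sqrt p + u) + p ^ ((1:ℝ)/2) * (Real.sqrt p + u)
          + p ^ (-(3:ℝ)/2) * (Real.sqrt p + u) + p ^ (-(1:ℝ)/2) * u
          + p ^ (-2:ℝ) + u^2) := by
  have hp0 : (0:ℝ) < p := by linarith
  set s := Real.sqrt p with hsdef
  have hs : 0 < s := Real.sqrt_pos.mpr hp0
  have hsp : s^2 = p := Real.sq_sqrt hp0.le
  have hs2 : 2 ≤ s^2 := by rw [hsp]; exact hp
  have hhalf : p ^ ((1:ℝ)/2) = s := by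
    rw [hsdef, Real.sqrt_eq_rpow]
  have h32 : p ^ ((3:ℝ)/2) = s^3 := by
    rw [show (3:ℝ)/2 = (1/2) * (3:ℕ) by push_cast; ring,
      Real.rpow_mul hp0.le, Real.rpow_natCast, hhalf]
  have hn32 : p ^ (-(3:ℝ)/2) = (s^3)⁻¹ := by
    rw [show -(3:ℝ)/2 = -((3:ℝ)/2) by ring, Real.rpow_neg hp0.le, h32]
  have hn12 : p ^ (-(1:ℝ)/2) = s⁻¹ := by
    rw [show -(1:ℝ)/2 = -((1:ℝ)/2) by ring, Real.rpow_neg hp0.le, hhalf]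
  have hn2 : p ^ (-2:ℝ) = (s^4)⁻¹ := by
    rw [show (-2:ℝ) = -((2:ℕ):ℝ) by norm_num, Real.rpow_neg hp0.le,
      Real.rpow_natCast, ← hsp]
    norm_num; ring_nf
  have key : 0 < p ^ ((3:ℝ)/2) * (s + u) + p ^ ((1:ℝ)/2) * (s + u)
        + p ^ (-(3:ℝ)/2) * (s + u) + p ^ (-(1:ℝ)/2) * u
        + p ^ (-2:ℝ) + u^2 := by
    rw [h32, hn32, hn12, hn2, hhalf]
    have hcore := stmt_6_core s u hs hs2 hu1 hu2
    have h4 : (0:ℝ) < s^4 := pow_pos hs 4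
    rw [show s^3 * (s+u) + s * (s+u) + (s^3)⁻¹ * (s+u) + s⁻¹ * u + (s^4)⁻¹ + u^2
        = (s^8 + s^6 + s^2 + 1 + u*(s^7+s^5+s^3+s) + u^2*s^4) / s^4 by
      field_simp; ring]
    positivity
  exact ⟨key, mul_pos (Real.rpow_pos_of_pos hp0 _) key⟩
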